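/- Fix j ∈ K̄ with j² = ℏ, let E = K(j) ⊆ K̄ and let σ₂ : E → E be the nontrivial K-algebra automorphism of E (σ₂(j) = −j), applied to matrices entrywise. Let L := {Z ∈ Mₙ(E) : trace(Z) = 0 and Z = S·σ₂(Z)·S}. Then: (a) there exists X ∈ GL(n, E) with σ₂(X) = X·S; and (b) for any such X, conjugation by X carries L bijectively onto {A ∈ Mₙ(E) : trace(A) = 0 and σ₂(A) = A}, i.e. {X·Z·X⁻¹ : Z ∈ L} = {A ∈ Mₙ(E) : trace(A) = 0, σ₂(A) = A} (the latter set being the traceless matrices with entries in K). In particular L is isomorphic to sl(n, K) via a conjugation of sl(n, E). -/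
import Mathlib


open Matrix

noncomputable section

/-- `K = ℂ((ℏ))`, the field of formal Laurent series over `ℂ`. -/
abbrev K : Type := LaurentSeries ℂ

/-- The series variable `ℏ` of `K = ℂ((ℏ))`. -/
def hbar : K := HahnSeries.single (1 : ℤ) (1 : ℂ)

/-- A fixed algebraic closure of `K`. -/
abbrev Kbar : Type := AlgebraicClosure K

/-- `E = K(j)`, the subfield of `K̄` generated over `K` by `j`. -/
abbrev Efield (j : Kbar) : IntermediateField K Kbar :=
  IntermediateField.adjoin K {j}

/-- `j` as an element of `E = K(j)`. -/
def jE (j : Kbar) : Efield j :=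
  ⟨j, IntermediateField.subset_adjoin K {j} rfl⟩

/-- The matrix `S` with 1's on the antidiagonal and 0 elsewhere
(`S_{i,k} = 1` iff `i + k = n + 1` in 1-based indexing). -/
def Smat (F : Type*) [Field F] (n : ℕ) : Matrix (Fin n) (Fin n) F :=
  Matrix.of fun i k => if (i : ℕ) + (k : ℕ) + 1 = n then 1 else 0

lemma charZeroK : CharZero K := by
  refine ⟨fun m n h => ?_⟩
  have : (HahnSeries.C : ℂ →+* K) (m : ℂ) = (HahnSeries.C : ℂ →+* K) (n : ℂ) := by
    rw [map_natCast, map_natCast, h]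
  exact Nat.cast_injective (HahnSeries.C_injective this)

lemma Smat_apply_rev (F : Type*) [Field F] (n : ℕ) (i k : Fin n) :
    Smat F n i k = if k = i.rev then 1 else 0 := by
  have hi := i.isLt; have hk := k.isLt
  simp only [Smat, Matrix.of_apply, Fin.ext_iff, Fin.val_rev]
  by_cases h : (i:ℕ) + k + 1 = n <;>
    [rw [if_pos h, if_pos (by omega)]; rw [if_neg h, if_neg (by omega)]]

lemma Smat_mul_self (F : Type*) [Field F] (n : ℕ) : Smat F n * Smat F n = 1 := by
  ext i k
  simp only [Matrix.mul_apply, Smat_apply_rev, Matrix.one_apply, ite_mul, one_mul, zero_mul]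
  rw [Finset.sum_ite_eq' Finset.univ i.rev (fun l => if k = l.rev then 1 else 0)]
  simp [Fin.rev_rev, eq_comm]

lemma mapσ_mul {F : Type*} [Field F] {n : ℕ} (σ : F →+* F)
    (M N : Matrix (Fin n) (Fin n) F) :
    (M * N).map σ = M.map σ * N.map σ := by
  ext i k
  simp [Matrix.mul_apply, Matrix.map_apply, map_sum]

lemma mapσ_one {F : Type*} [Field F] {n : ℕ} (σ : F →+* F) :
    (1 : Matrix (Fin n) (Fin n) F).map σ = 1 := by
  ext i k
  simp only [Matrix.map_apply, Matrix.one_apply]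
  split_ifs <;> simp

/-- Part (a), generalized: existence of `X`. -/
lemma partA {F : Type*} [Field F] (n : ℕ) (σ : F →+* F) (u : F)
    (hu : σ u = -u) (hune : u ≠ 0) (h2 : (2 : F) ≠ 0) :
    ∃ X : Matrix (Fin n) (Fin n) F, IsUnit X ∧ X.map σ = X * Smat F n := by
  have hSS : Smat F n * Smat F n = 1 := Smat_mul_self F n
  set a : F := 1 + u with ha
  set b : F := 1 - u with hb
  have hsa : σ a = b := by rw [ha, hb, map_add, _root_.map_one, hu]; ring
  have hsb : σ b = a := by rw [ha, hb, map_sub, _root_.map_one, hu]; ring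
  set c : F := a * a - b * b with hc
  have hcne : c ≠ 0 := by
    have h4 : c = 2 * (2 * u) := by rw [hc, ha, hb]; ring
    rw [h4]
    exact mul_ne_zero h2 (mul_ne_zero h2 hune)
  refine ⟨a • (1 : Matrix (Fin n) (Fin n) F) + b • Smat F n, ?_, ?_⟩
  · have hXY : (a • (1 : Matrix (Fin n) (Fin n) F) + b • Smat F n) *
        (a • (1 : Matrix (Fin n) (Fin n) F) - b • Smat F n) =
        c • (1 : Matrix (Fin n) (Fin n) F) := by
      simp only [add_mul, mul_sub, Matrix.smul_mul, Matrix.mul_smul, smul_smul, hSS,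
        one_mul, mul_one]
      rw [hc, sub_smul, mul_comm b a]
      abel
    have h1 : (a • (1 : Matrix (Fin n) (Fin n) F) + b • Smat F n) *
        (c⁻¹ • (a • (1 : Matrix (Fin n) (Fin n) F) - b • Smat F n)) = 1 := by
      rw [Matrix.mul_smul, hXY, smul_smul, inv_mul_cancel₀ hcne, one_smul]
    exact ⟨⟨_, _, h1, mul_eq_one_comm.mp h1⟩, rfl⟩
  · have lhs : (a • (1 : Matrix (Fin n) (Fin n) F) + b • Smat F n).map σ =
        b • (1 : Matrix (Fin n) (Fin n) F) + a • Smat F n := by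
      ext i k
      simp only [Matrix.map_apply, Matrix.add_apply, Matrix.smul_apply, smul_eq_mul,
        Matrix.one_apply, Smat, Matrix.of_apply, _root_.map_add, _root_.map_mul]
      split_ifs <;> simp [hsa, hsb]
    rw [lhs, add_mul, Matrix.smul_mul, Matrix.smul_mul, one_mul, hSS]
    abel

/-- Part (b), generalized. -/
lemma partB {F : Type*} [Field F] (n : ℕ) (σ : F →+* F)
    (X : Matrix (Fin n) (Fin n) F) (hU : IsUnit X)
    (hX : X.map σ = X * Smat F n) :
    (fun Z => X * Z * X⁻¹) ''
        {Z : Matrix (Fin n) (Fin n) F |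
          Matrix.trace Z = 0 ∧ Z = Smat F n * Z.map σ * Smat F n}
      = {A : Matrix (Fin n) (Fin n) F | Matrix.trace A = 0 ∧ A.map σ = A} := by
  have hSS : Smat F n * Smat F n = 1 := Smat_mul_self F n
  have hd : IsUnit X.det := (Matrix.isUnit_iff_isUnit_det X).mp hU
  have h1 : X * X⁻¹ = 1 := Matrix.mul_nonsing_inv X hd
  have h2 : X⁻¹ * X = 1 := Matrix.nonsing_inv_mul X hd
  have hinv : X⁻¹.map σ = Smat F n * X⁻¹ := by
    have e1 : X * (Smat F n * X⁻¹.map σ) = 1 := by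
      rw [← Matrix.mul_assoc, ← hX, ← mapσ_mul, h1, mapσ_one]
    have e2 : X⁻¹ = Smat F n * X⁻¹.map σ := Matrix.inv_eq_right_inv e1
    calc X⁻¹.map σ = (Smat F n * Smat F n) * X⁻¹.map σ := by rw [hSS, one_mul]
      _ = Smat F n * (Smat F n * X⁻¹.map σ) := by rw [Matrix.mul_assoc]
      _ = Smat F n * X⁻¹ := by rw [← e2]
  ext A
  simp only [Set.mem_image, Set.mem_setOf_eq]
  constructor
  · rintro ⟨Z, ⟨htr, hZ⟩, rfl⟩
    constructor
    · rw [Matrix.trace_mul_comm, ← Matrix.mul_assoc, h2, one_mul, htr]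
    · rw [mapσ_mul, mapσ_mul, hX, hinv]
      conv_rhs => rw [hZ]
      simp only [Matrix.mul_assoc]
  · rintro ⟨htr, hA⟩
    refine ⟨X⁻¹ * A * X, ⟨?_, ?_⟩, ?_⟩
    · rw [Matrix.trace_mul_comm, ← Matrix.mul_assoc, h1, one_mul, htr]
    · rw [mapσ_mul, mapσ_mul, hinv, hA, hX]
      calc X⁻¹ * A * X
          = (Smat F n * Smat F n) * (X⁻¹ * A * X) * (Smat F n * Smat F n) := by
            rw [hSS, one_mul, mul_one]
        _ = Smat F n * (Smat F n * X⁻¹ * (A * (X * Smat F n))) * Smat F n := by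
            simp only [Matrix.mul_assoc]
        _ = Smat F n * (Smat F n * X⁻¹ * A * (X * Smat F n)) * Smat F n := by
            simp only [Matrix.mul_assoc]
    · show X * (X⁻¹ * A * X) * X⁻¹ = A
      calc X * (X⁻¹ * A * X) * X⁻¹ = (X * X⁻¹) * (A * (X * X⁻¹)) := by
            simp only [Matrix.mul_assoc]
        _ = A := by rw [h1, one_mul, mul_one]


/-- Let `j² = ℏ`, `E = K(j)`, and let `σ₂` be the nontrivial `K`-automorphism
of `E` (so `σ₂(j) = −j`).  Let `L = {Z ∈ Mₙ(E) : tr Z = 0, Z = S·σ₂(Z)·S}`.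
Then (a) there is `X ∈ GL(n, E)` with `σ₂(X) = X·S`, and (b) for any such `X`,
conjugation by `X` carries `L` bijectively onto the traceless matrices fixed
entrywise by `σ₂`, i.e. the traceless matrices with entries in `K`.  In
particular `L ≅ sl(n, K)` via a conjugation of `sl(n, E)`. -/
theorem statement10 (n : ℕ) (j : Kbar)
    (hj : j ^ 2 = algebraMap K Kbar hbar)
    (σ₂ : Efield j ≃ₐ[K] Efield j) (hσ : σ₂ (jE j) = - jE j) :
    (∃ X : Matrix (Fin n) (Fin n) (Efield j),
        IsUnit X ∧ X.map σ₂ = X * Smat (Efield j) n) ∧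
    ∀ X : Matrix (Fin n) (Fin n) (Efield j),
      IsUnit X → X.map σ₂ = X * Smat (Efield j) n →
      (fun Z => X * Z * X⁻¹) ''
          {Z : Matrix (Fin n) (Fin n) (Efield j) |
            Matrix.trace Z = 0 ∧ Z = Smat (Efield j) n * Z.map σ₂ * Smat (Efield j) n}
        = {A : Matrix (Fin n) (Fin n) (Efield j) |
            Matrix.trace A = 0 ∧ A.map σ₂ = A} := by
  have hcoe : ⇑(σ₂ : Efield j →+* Efield j) = ⇑σ₂ := rfl
  have hjne : jE j ≠ 0 := by
    intro h
    have hj0 : j = 0 := congrArg Subtype.val h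
    rw [hj0] at hj
    have h2 : (hbar : K) = 0 := (algebraMap K Kbar).injective (by simpa using hj.symm)
    exact HahnSeries.single_ne_zero (one_ne_zero) h2
  have h2 : (2 : Efield j) ≠ 0 := by
    have := charZeroK
    have : CharZero (Efield j) :=
      charZero_of_injective_algebraMap (algebraMap K (Efield j)).injective
    exact two_ne_zero
  have hu : (σ₂ : Efield j →+* Efield j) (jE j) = -(jE j) := hσ
  constructor
  · obtain ⟨X, hX1, hX2⟩ := partA n (σ₂ : Efield j →+* Efield j) (jE j) hu hjne h2
    exact ⟨X, hX1, by rw [← hcoe]; exact hX2⟩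
  · intro X hU hX
    have hX' : X.map ⇑(σ₂ : Efield j →+* Efield j) = X * Smat (Efield j) n := by
      rw [hcoe]; exact hX
    have := partB n (σ₂ : Efield j →+* Efield j) X hU hX'
    rw [← hcoe]
    exact this
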